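/- Let (X,⊥) be a point-closed Sasaki space. Then C(X,⊥) is an atomistic lattice with the covering property. -/

import Mathlib

/-!
Atoms are singletons by point-closedness, so every orthoclosed set is the union of its atoms.
For the covering property, let `φ` be the Sasaki map onto `A^⊥` and `p = φ x`. The Sasaki
adjunction gives `(A ∪ {x})^⊥ = A^⊥ ∩ p^⊥`, from which `A^⊥ ∩ (A ∨ {x}) = {p}`. Any
`b ∈ (A ∨ {x}) \ A` is sent by `φ` into `A^⊥ ∩ (A ∨ {x})`, hence to `p`, and then
`b^⊥ ∩ A^⊥ ⊆ p^⊥`; so an orthoclosed `B` with `A ⊂ B ⊆ A ∨ {x}` satisfies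
`B^⊥ ⊆ (A ∪ {x})^⊥`, i.e. `A ∨ {x} ⊆ B`.
-/

/-- The set of elements orthogonal to every element of `A`. -/
def perpSet {X : Type*} (perp : X → X → Prop) (A : Set X) : Set X :=
  {x | ∀ a ∈ A, perp x a}

/-- A subset is orthoclosed if it equals its double orthocomplement. -/
def Orthoclosed {X : Type*} (perp : X → X → Prop) (A : Set X) : Prop :=
  perpSet perp (perpSet perp A) = A

/-- `φ` (restricted to `∁(A^⊥)`) is a Sasaki map to the orthoclosed set `A`. -/
def IsSasakiMap {X : Type*} (perp : X → X → Prop) (A : Set X) (φ : X → X) : Prop :=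
  (∀ e ∈ (perpSet perp A)ᶜ, φ e ∈ A) ∧
  (∀ e ∈ A, φ e = e) ∧
  (∀ e ∈ (perpSet perp A)ᶜ, ∀ f ∈ (perpSet perp A)ᶜ, (perp (φ e) f ↔ perp e (φ f)))

/-- A Sasaki space: every orthoclosed subset admits a Sasaki map. -/
def IsSasakiSpace {X : Type*} (perp : X → X → Prop) : Prop :=
  ∀ A : Set X, Orthoclosed perp A → ∃ φ : X → X, IsSasakiMap perp A φ

/-- An atom of the lattice of orthoclosed subsets: a minimal nonempty
orthoclosed set. -/
def IsAtomOC {X : Type*} (perp : X → X → Prop) (A : Set X) : Prop :=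
  Orthoclosed perp A ∧ A ≠ ∅ ∧
    ∀ B : Set X, Orthoclosed perp B → B ⊆ A → B = ∅ ∨ B = A

section Orthoset

variable {X : Type*} {perp : X → X → Prop}

lemma perpSet_anti {S T : Set X} (h : S ⊆ T) : perpSet perp T ⊆ perpSet perp S :=
  fun _ hx a ha => hx a (h ha)

lemma subset_perpSet_perpSet (hsymm : ∀ x y, perp x y → perp y x) (S : Set X) :
    S ⊆ perpSet perp (perpSet perp S) :=
  fun s hs _ hz => hsymm _ _ (hz s hs)

lemma orthoclosed_perpSet (hsymm : ∀ x y, perp x y → perp y x) (S : Set X) :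
    Orthoclosed perp (perpSet perp S) :=
  (perpSet_anti (subset_perpSet_perpSet hsymm S)).antisymm (subset_perpSet_perpSet hsymm _)

lemma mem_perpSet_union_singleton {A : Set X} {x w : X} :
    w ∈ perpSet perp (A ∪ {x}) ↔ w ∈ perpSet perp A ∧ perp w x := by
  simp only [perpSet, Set.mem_ofPred_eq, Set.mem_union, Set.mem_singleton_iff, or_imp,
    forall_and, forall_eq]

lemma ssubset_perpSet_perpSet_union_singleton (hsymm : ∀ x y, perp x y → perp y x)
    {A : Set X} {x : X} (hx : x ∉ A) : A ⊂ perpSet perp (perpSet perp (A ∪ {x})) := by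
  have hsub := subset_perpSet_perpSet hsymm (A ∪ {x})
  exact Set.ssubset_iff_subset_ne.mpr ⟨Set.subset_union_left.trans hsub,
    fun h => hx (h ▸ hsub (Set.mem_union_right A rfl))⟩

end Orthoset

section Atoms

variable {X : Type*} {perp : X → X → Prop} (hpoint : ∀ x : X, Orthoclosed perp {x})
include hpoint

lemma isAtomOC_iff_exists_eq_singleton {A : Set X} : IsAtomOC perp A ↔ ∃ x, A = {x} := by
  constructor
  · rintro ⟨-, hne, hmin⟩
    obtain ⟨x, hx⟩ := Set.nonempty_iff_ne_empty.mpr hne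
    exact ⟨x, ((hmin {x} (hpoint x) (Set.singleton_subset_iff.mpr hx)).resolve_left
      (Set.singleton_ne_empty x)).symm⟩
  · rintro ⟨x, rfl⟩
    exact ⟨hpoint x, Set.singleton_ne_empty x, fun _ _ hB => Set.subset_singleton_iff_eq.mp hB⟩

lemma sUnion_isAtomOC_subset (A : Set X) : ⋃₀ {B | IsAtomOC perp B ∧ B ⊆ A} = A := by
  refine Set.sUnion_subset (fun _ hB => hB.2) |>.antisymm fun y hy => ?_
  exact ⟨{y}, ⟨(isAtomOC_iff_exists_eq_singleton hpoint).mpr ⟨y, rfl⟩,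
    Set.singleton_subset_iff.mpr hy⟩, rfl⟩

end Atoms

section Sasaki

variable {X : Type*} {perp : X → X → Prop}

lemma IsSasakiMap.perp_iff (hirrefl : ∀ x, ¬ perp x x) {B : Set X} {φ : X → X}
    (hφ : IsSasakiMap perp B φ) {e w : X} (he : e ∉ perpSet perp B) (hw : w ∈ B) :
    perp (φ e) w ↔ perp e w := by
  have hw' : w ∉ perpSet perp B := fun h => hirrefl w (h w hw)
  rw [hφ.2.2 e he w hw', hφ.2.1 w hw]

section Covering

variable (hsymm : ∀ x y, perp x y → perp y x) (hirrefl : ∀ x, ¬ perp x x)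
  {A : Set X} (hA : Orthoclosed perp A) {φ : X → X} (hφ : IsSasakiMap perp (perpSet perp A) φ)
  {x : X} (hx : x ∉ A)
include hsymm hirrefl hA hφ hx

lemma IsSasakiMap.mem_perpSet_union_singleton_iff {w : X} :
    w ∈ perpSet perp (A ∪ {x}) ↔ w ∈ perpSet perp A ∧ perp w (φ x) := by
  rw [mem_perpSet_union_singleton]
  refine and_congr_right fun hw => ?_
  have hx' : x ∉ perpSet perp (perpSet perp A) := hA.symm ▸ hx
  exact ⟨fun h => hsymm _ _ ((hφ.perp_iff hirrefl hx' hw).mpr (hsymm _ _ h)),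
    fun h => hsymm _ _ ((hφ.perp_iff hirrefl hx' hw).mp (hsymm _ _ h))⟩

lemma IsSasakiMap.eq_of_mem_perpSet_of_mem_join (hpoint : ∀ x : X, Orthoclosed perp {x})
    {d : X} (hdA : d ∈ perpSet perp A) (hd : d ∈ perpSet perp (perpSet perp (A ∪ {x}))) :
    d = φ x := by
  suffices d ∈ perpSet perp (perpSet perp {φ x}) by rwa [hpoint] at this
  intro u hu
  have hup : perp u (φ x) := hu _ rfl
  by_cases huA : u ∈ A
  · exact hdA u huA
  have hu' : u ∉ perpSet perp (perpSet perp A) := hA.symm ▸ huA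
  have hφu : φ u ∈ perpSet perp A := hφ.1 u hu'
  have hφup : perp (φ u) (φ x) := (hφ.perp_iff hirrefl hu' (hφ.1 x (hA.symm ▸ hx))).mpr hup
  have hdφu : perp d (φ u) :=
    hd _ ((hφ.mem_perpSet_union_singleton_iff hsymm hirrefl hA hx).mpr ⟨hφu, hφup⟩)
  exact hsymm _ _ ((hφ.perp_iff hirrefl hu' hdA).mp (hsymm _ _ hdφu))

lemma IsSasakiMap.apply_eq_of_mem_join (hpoint : ∀ x : X, Orthoclosed perp {x}) {b : X}
    (hb : b ∈ perpSet perp (perpSet perp (A ∪ {x}))) (hbA : b ∉ A) : φ b = φ x := by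
  have hb' : b ∉ perpSet perp (perpSet perp A) := hA.symm ▸ hbA
  refine hφ.eq_of_mem_perpSet_of_mem_join hsymm hirrefl hA hx hpoint (hφ.1 b hb') fun w hw => ?_
  exact (hφ.perp_iff hirrefl hb' (mem_perpSet_union_singleton.mp hw).1).mpr (hb w hw)

lemma IsSasakiMap.join_subset_of_ssubset (hpoint : ∀ x : X, Orthoclosed perp {x}) {B : Set X}
    (hB : Orthoclosed perp B) (hAB : A ⊂ B) (hBC : B ⊆ perpSet perp (perpSet perp (A ∪ {x}))) :
    perpSet perp (perpSet perp (A ∪ {x})) ⊆ B := by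
  obtain ⟨b, hbB, hbA⟩ := Set.exists_of_ssubset hAB
  have hb' : b ∉ perpSet perp (perpSet perp A) := hA.symm ▸ hbA
  have hφb := hφ.apply_eq_of_mem_join hsymm hirrefl hA hx hpoint (hBC hbB) hbA
  rw [← hB]
  refine perpSet_anti fun z hz => ?_
  have hzA : z ∈ perpSet perp A := perpSet_anti hAB.subset hz
  refine (hφ.mem_perpSet_union_singleton_iff hsymm hirrefl hA hx).mpr ⟨hzA, ?_⟩
  rw [← hφb]
  exact hsymm _ _ ((hφ.perp_iff hirrefl hb' hzA).mpr (hsymm _ _ (hz b hbB)))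

end Covering

end Sasaki

/-- for a point-closed Sasaki space, `C(X,⊥)` is atomistic (the
atoms are exactly the singletons and every orthoclosed set is the join of the
atoms it contains) and has the covering property. -/
theorem pointClosed_sasaki_is_AC {X : Type*} (perp : X → X → Prop)
    (hsymm : ∀ x y, perp x y → perp y x) (hirrefl : ∀ x, ¬ perp x x)
    (hpoint : ∀ x : X, Orthoclosed perp {x})
    (hSasaki : IsSasakiSpace perp) :
    (∀ A : Set X, Orthoclosed perp A → (IsAtomOC perp A ↔ ∃ x : X, A = {x})) ∧
    (∀ A : Set X, Orthoclosed perp A →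
      A = perpSet perp (perpSet perp (⋃₀ {B | IsAtomOC perp B ∧ B ⊆ A}))) ∧
    (∀ A : Set X, Orthoclosed perp A → ∀ x ∉ A,
      A ⊂ perpSet perp (perpSet perp (A ∪ {x})) ∧
      ∀ B : Set X, Orthoclosed perp B → A ⊂ B →
        B ⊆ perpSet perp (perpSet perp (A ∪ {x})) →
        B = perpSet perp (perpSet perp (A ∪ {x}))) := by
  refine ⟨fun A _ => isAtomOC_iff_exists_eq_singleton hpoint,
    fun A hA => by rw [sUnion_isAtomOC_subset hpoint, hA], fun A hA x hx => ?_⟩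
  obtain ⟨φ, hφ⟩ := hSasaki _ (orthoclosed_perpSet hsymm A)
  exact ⟨ssubset_perpSet_perpSet_union_singleton hsymm hx, fun B hB hAB hBC =>
    hBC.antisymm (hφ.join_subset_of_ssubset hsymm hirrefl hA hx hpoint hB hAB hBC)⟩
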